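/- Let X be a locally compact Hausdorff space, σ a local homeomorphism from an open subset U of X onto an open subset V of X, and endow the Deaconu–Renault groupoid G(X,σ) with the topology generated by the sets Z(A,m,n,B). Then the isotropy Iso(G(X,σ)) := {(x,k,y) ∈ G(X,σ) : x = y} equals {(x,k,x) : x ∈ X, k ∈ Stab(x)}, and its interior in G(X,σ) equals {(x,k,x) : x ∈ X, k ∈ Stab^ess(x)}. In particular, for each (x,k,x) in the interior of the isotropy there exist m, n ∈ ℕ₀ with k = m − n and an open neighbourhood O ⊆ U_m ∩ U_n of x with σᵐ|_O = σⁿ|_O. -/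

import Mathlib

open Set Function

/-- The domain `Uₙ` of the `n`-th iterate of a local homeomorphism `σ` from an open
set `U ⊆ X` onto an open set `V ⊆ X`: `U₀ = X` and `Uₙ₊₁ = σ⁻¹(Uₙ ∩ V)` (inside `U`). -/
def iterDom {X : Type*} (σ : X → X) (U V : Set X) : ℕ → Set X
  | 0 => Set.univ
  | n + 1 => U ∩ σ ⁻¹' (iterDom σ U V n ∩ V)

/-- `Stab(x) = {m - n : x ∈ U_m ∩ U_n, σᵐ(x) = σⁿ(x)} ⊆ ℤ`. -/
def DRStab {X : Type*} (σ : X → X) (U V : Set X) (x : X) : Set ℤ :=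
  {p | ∃ m n : ℕ, p = (m : ℤ) - (n : ℤ) ∧
    x ∈ iterDom σ U V m ∩ iterDom σ U V n ∧ σ^[m] x = σ^[n] x}

/-- `Stab^ess(x)`: those `m - n` for which `σᵐ = σⁿ` on a neighbourhood of `x`. -/
def DRStabEss {X : Type*} [TopologicalSpace X] (σ : X → X) (U V : Set X) (x : X) : Set ℤ :=
  {p | ∃ m n : ℕ, p = (m : ℤ) - (n : ℤ) ∧
    ∃ O : Set X, IsOpen O ∧ x ∈ O ∧ O ⊆ iterDom σ U V m ∩ iterDom σ U V n ∧
      Set.EqOn (σ^[m]) (σ^[n]) O}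

/-- `Stab_min(x) := min {p ∈ Stab(x) : p ≥ 1}` in `ℕ∞` (`min ∅ = ∞`). -/
noncomputable def DRStabMin {X : Type*} (σ : X → X) (U V : Set X) (x : X) : ℕ∞ :=
  sInf {p : ℕ∞ | ∃ q : ℕ, p = (q : ℕ∞) ∧ 1 ≤ q ∧ (q : ℤ) ∈ DRStab σ U V x}

/-- `Stab^ess_min(x) := min {p ∈ Stab^ess(x) : p ≥ 1}` in `ℕ∞`. -/
noncomputable def DRStabEssMin {X : Type*} [TopologicalSpace X] (σ : X → X) (U V : Set X)
    (x : X) : ℕ∞ :=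
  sInf {p : ℕ∞ | ∃ q : ℕ, p = (q : ℕ∞) ∧ 1 ≤ q ∧ (q : ℤ) ∈ DRStabEss σ U V x}

/-- `(h, l, k, l', k')` is a continuous orbit equivalence from `(X, σ)` to `(Y, τ)`. -/
def DRCOE {X Y : Type*} [TopologicalSpace X] [TopologicalSpace Y]
    (σ : X → X) (Uσ : Set X) (τ : Y → Y) (Uτ : Set Y)
    (h : X ≃ₜ Y) (l k : X → ℕ) (l' k' : Y → ℕ) : Prop :=
  ContinuousOn l Uσ ∧ ContinuousOn k Uσ ∧ ContinuousOn l' Uτ ∧ ContinuousOn k' Uτ ∧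
    (∀ x ∈ Uσ, τ^[l x] (h x) = τ^[k x] (h (σ x))) ∧
    (∀ y ∈ Uτ, σ^[l' y] (h.symm y) = σ^[k' y] (h.symm (τ y)))

/-- The continuous orbit equivalence `(h, l, k, l', k')` preserves stabilisers. -/
def DRPreservesStab {X Y : Type*} [TopologicalSpace X] [TopologicalSpace Y]
    (σ : X → X) (Uσ Vσ : Set X) (τ : Y → Y) (Uτ Vτ : Set Y)
    (h : X ≃ₜ Y) (l k : X → ℕ) (l' k' : Y → ℕ) : Prop :=
  (∀ x : X, DRStabMin σ Uσ Vσ x < ⊤ ↔ DRStabMin τ Uτ Vτ (h x) < ⊤) ∧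
  (∀ (x : X) (p : ℕ), 1 ≤ p → (p : ℕ∞) = DRStabMin σ Uσ Vσ x → σ^[p] x = x →
    (((∑ j ∈ Finset.range p, ((l (σ^[j] x) : ℤ) - (k (σ^[j] x) : ℤ))).natAbs : ℕ∞)
      = DRStabMin τ Uτ Vτ (h x))) ∧
  (∀ (y : Y) (p : ℕ), 1 ≤ p → (p : ℕ∞) = DRStabMin τ Uτ Vτ y → τ^[p] y = y →
    (((∑ j ∈ Finset.range p, ((l' (τ^[j] y) : ℤ) - (k' (τ^[j] y) : ℤ))).natAbs : ℕ∞)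
      = DRStabMin σ Uσ Vσ (h.symm y)))

/-- The continuous orbit equivalence `(h, l, k, l', k')` preserves essential stabilisers. -/
def DRPreservesStabEss {X Y : Type*} [TopologicalSpace X] [TopologicalSpace Y]
    (σ : X → X) (Uσ Vσ : Set X) (τ : Y → Y) (Uτ Vτ : Set Y)
    (h : X ≃ₜ Y) (l k : X → ℕ) (l' k' : Y → ℕ) : Prop :=
  (∀ x : X, DRStabEssMin σ Uσ Vσ x < ⊤ ↔ DRStabEssMin τ Uτ Vτ (h x) < ⊤) ∧
  (∀ (x : X) (p : ℕ), 1 ≤ p → (p : ℕ∞) = DRStabEssMin σ Uσ Vσ x → σ^[p] x = x →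
    (((∑ j ∈ Finset.range p, ((l (σ^[j] x) : ℤ) - (k (σ^[j] x) : ℤ))).natAbs : ℕ∞)
      = DRStabEssMin τ Uτ Vτ (h x))) ∧
  (∀ (y : Y) (p : ℕ), 1 ≤ p → (p : ℕ∞) = DRStabEssMin τ Uτ Vτ y → τ^[p] y = y →
    (((∑ j ∈ Finset.range p, ((l' (τ^[j] y) : ℤ) - (k' (τ^[j] y) : ℤ))).natAbs : ℕ∞)
      = DRStabEssMin σ Uσ Vσ (h.symm y)))

/-- The Deaconu–Renault groupoid `G(X,σ)` as a subset of `X × ℤ × X`. -/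
def DRset {X : Type*} (σ : X → X) (U V : Set X) : Set (X × ℤ × X) :=
  {p | ∃ m n : ℕ, p.2.1 = (m : ℤ) - (n : ℤ) ∧
    p.1 ∈ iterDom σ U V m ∧ p.2.2 ∈ iterDom σ U V n ∧ σ^[m] p.1 = σ^[n] p.2.2}

/-- `f` restricts to a homeomorphism of `A` onto its (open) image. -/
def HomeoOnto {X : Type*} [TopologicalSpace X] (f : X → X) (A : Set X) : Prop :=
  ∃ e : PartialHomeomorph X X, e.source = A ∧ e.target = f '' A ∧ Set.EqOn f e A

/-- The basic sets `Z(A, m, n, B)` of the Deaconu–Renault groupoid. -/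
def DRbasic {X : Type*} [TopologicalSpace X] (σ : X → X) (U V : Set X) :
    Set (Set ↥(DRset σ U V)) :=
  {S | ∃ (m n : ℕ) (A B : Set X), IsOpen A ∧ IsOpen B ∧
    A ⊆ iterDom σ U V m ∧ B ⊆ iterDom σ U V n ∧
    HomeoOnto (σ^[m]) A ∧ HomeoOnto (σ^[n]) B ∧
    S = {g : ↥(DRset σ U V) | g.1.1 ∈ A ∧ g.1.2.2 ∈ B ∧
      g.1.2.1 = (m : ℤ) - (n : ℤ) ∧ σ^[m] g.1.1 = σ^[n] g.1.2.2}}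

/-- The topology on `G(X,σ)` generated by the sets `Z(A,m,n,B)`. -/
def DRtop {X : Type*} [TopologicalSpace X] (σ : X → X) (U V : Set X) :
    TopologicalSpace ↥(DRset σ U V) :=
  TopologicalSpace.generateFrom (DRbasic σ U V)

/-- The inversion map `(x, k, y) ↦ (y, -k, x)` of `G(X,σ)`. -/
def DRinv {X : Type*} (σ : X → X) (U V : Set X) : ↥(DRset σ U V) → ↥(DRset σ U V) :=
  fun g => ⟨(g.1.2.2, -g.1.2.1, g.1.1), by
    obtain ⟨m, n, h1, h2, h3, h4⟩ := g.2
    exact ⟨n, m, by rw [h1]; ring, h3, h2, h4.symm⟩⟩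

/-!
Every arrow `(x, m - n, y)` lies in some `Z(A, m, n, B)`, and two of these sets through an arrow
contain a third one with the smaller pair of indices, so they form a basis. If `Z(A, m, n, B)`
lies in the isotropy, then `σᵐ = σⁿ` near `x`, since `σᵐ` is injective on `A`; conversely, if
`σᵐ = σⁿ` on a neighbourhood `A` of `x` on which `σᵐ` is a homeomorphism onto its image, then
`Z(A, m, n, A)` is a neighbourhood of `(x, m - n, x)` inside the isotropy.
-/

section IterDom

variable {X : Type*} {σ : X → X} {U V : Set X}

lemma mapsTo_iterDom_succ (n : ℕ) :
    MapsTo σ (iterDom σ U V (n + 1)) (iterDom σ U V n) :=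
  fun _ hx => hx.2.1

lemma isOpen_iterDom [TopologicalSpace X] (hU : IsOpen U) (hV : IsOpen V)
    (hσ : ContinuousOn σ U) : ∀ n, IsOpen (iterDom σ U V n)
  | 0 => isOpen_univ
  | n + 1 => hσ.isOpen_inter_preimage hU ((isOpen_iterDom hU hV hσ n).inter hV)

lemma isLocalHomeomorphOn_iterate_iterDom [TopologicalSpace X] (hσ : IsLocalHomeomorphOn σ U) :
    ∀ n, IsLocalHomeomorphOn σ^[n] (iterDom σ U V n)
  | 0 => (Homeomorph.refl X).isLocalHomeomorph.isLocalHomeomorphOn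
  | n + 1 => by
    rw [iterate_succ]
    exact (isLocalHomeomorphOn_iterate_iterDom hσ n).comp (hσ.mono inter_subset_left)
      (mapsTo_iterDom_succ n)

end IterDom

section HomeoOnto

variable {X : Type*} [TopologicalSpace X] {f g : X → X} {A A' s : Set X}

lemma HomeoOnto.injOn (h : HomeoOnto f A) : InjOn f A := by
  obtain ⟨e, rfl, -, he⟩ := h
  exact e.injOn.congr he.symm

lemma HomeoOnto.congr (h : HomeoOnto f A) (hfg : EqOn f g A) : HomeoOnto g A := by
  obtain ⟨e, hs, ht, he⟩ := h
  exact ⟨e, hs, by rw [ht, hfg.image_eq], hfg.symm.trans he⟩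

lemma HomeoOnto.mono (h : HomeoOnto f A) (hA' : A' ⊆ A) : HomeoOnto f A' := by
  obtain ⟨e, rfl, ht, he⟩ := h
  let e' : PartialHomeomorph X X :=
    { toPartialEquiv := e.toPartialEquiv.restr A'
      continuousOn_toFun := e.continuousOn.mono inter_subset_left
      continuousOn_invFun := e.continuousOn_symm.mono inter_subset_left }
  refine ⟨e', inter_eq_self_of_subset_right hA', ?_, he.mono hA'⟩
  change e.target ∩ e.symm ⁻¹' A' = f '' A'
  rw [← e.image_source_inter_eq', inter_eq_self_of_subset_right hA', (he.mono hA').image_eq]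

lemma OpenPartialHomeomorph.homeoOnto_source (e : OpenPartialHomeomorph X X) :
    HomeoOnto e e.source :=
  ⟨e.toPartialHomeomorph, rfl, e.image_source_eq_target.symm, eqOn_refl _ _⟩

lemma IsLocalHomeomorphOn.exists_homeoOnto (hf : IsLocalHomeomorphOn f s) (hs : IsOpen s)
    {x : X} (hx : x ∈ s) : ∃ A, IsOpen A ∧ x ∈ A ∧ A ⊆ s ∧ HomeoOnto f A := by
  obtain ⟨e, hxe, rfl⟩ := hf x hx
  exact ⟨e.source ∩ s, e.open_source.inter hs, ⟨hxe, hx⟩, inter_subset_right,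
    e.homeoOnto_source.mono inter_subset_left⟩

lemma IsLocalHomeomorphOn.isOpen_image_of_subset (hf : IsLocalHomeomorphOn f s)
    (hA : IsOpen A) (hAs : A ⊆ s) : IsOpen (f '' A) := by
  refine isOpen_iff_mem_nhds.2 ?_
  rintro _ ⟨a, ha, rfl⟩
  rw [← hf.map_nhds_eq (hAs ha)]
  exact Filter.image_mem_map (hA.mem_nhds ha)

end HomeoOnto

section Groupoid

variable {X : Type*} {σ : X → X} {U V : Set X}

/-- `Z(A, m, n, B)`, for arbitrary `A` and `B`. -/
def DRZ (σ : X → X) (U V : Set X) (m n : ℕ) (A B : Set X) : Set ↥(DRset σ U V) :=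
  {g | g.1.1 ∈ A ∧ g.1.2.2 ∈ B ∧ g.1.2.1 = (m : ℤ) - (n : ℤ) ∧ σ^[m] g.1.1 = σ^[n] g.1.2.2}

def DRisotropy (σ : X → X) (U V : Set X) : Set ↥(DRset σ U V) :=
  {g | g.1.1 = g.1.2.2}

lemma DRZ_mono {m n : ℕ} {A A' B B' : Set X} (hA : A ⊆ A') (hB : B ⊆ B') :
    DRZ σ U V m n A B ⊆ DRZ σ U V m n A' B' :=
  fun _ ⟨hx, hy, hk, he⟩ => ⟨hA hx, hB hy, hk, he⟩

lemma DRZ_subset_DRZ_add (m n d : ℕ) (A B : Set X) :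
    DRZ σ U V m n A B ⊆ DRZ σ U V (m + d) (n + d) A B := by
  rintro g ⟨hx, hy, hk, he⟩
  refine ⟨hx, hy, by rw [hk]; push_cast; ring, ?_⟩
  rw [add_comm m, add_comm n, iterate_add_apply, iterate_add_apply, he]

lemma DRisotropy_eq : DRisotropy σ U V = {g | g.1.1 = g.1.2.2 ∧ g.1.2.1 ∈ DRStab σ U V g.1.1} := by
  ext g
  refine ⟨fun hxy => ⟨hxy, ?_⟩, And.left⟩
  obtain ⟨m, n, hk, hx, hy, he⟩ := g.2
  exact ⟨m, n, hk, ⟨hx, hxy ▸ hy⟩, hxy ▸ he⟩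

variable [TopologicalSpace X]

/-- The basic set with the smaller indices, cut down to the intersected domains, lies in both:
`σ^[m₁] x = σ^[n₁] y` implies `σ^[m₁ + d] x = σ^[n₁ + d] y`. -/
lemma exists_DRbasic_subset_inter_of_le {m₁ n₁ m₂ n₂ : ℕ} {A₁ B₁ A₂ B₂ : Set X}
    (hA₁o : IsOpen A₁) (hB₁o : IsOpen B₁) (hA₂o : IsOpen A₂) (hB₂o : IsOpen B₂)
    (hA₁ : A₁ ⊆ iterDom σ U V m₁) (hB₁ : B₁ ⊆ iterDom σ U V n₁)
    (hHA₁ : HomeoOnto (σ^[m₁]) A₁) (hHB₁ : HomeoOnto (σ^[n₁]) B₁)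
    (hm : m₁ ≤ m₂) {g : ↥(DRset σ U V)}
    (hg₁ : g ∈ DRZ σ U V m₁ n₁ A₁ B₁) (hg₂ : g ∈ DRZ σ U V m₂ n₂ A₂ B₂) :
    ∃ S ∈ DRbasic σ U V, g ∈ S ∧ S ⊆ DRZ σ U V m₁ n₁ A₁ B₁ ∩ DRZ σ U V m₂ n₂ A₂ B₂ := by
  obtain ⟨d, rfl⟩ := Nat.exists_eq_add_of_le hm
  obtain rfl : n₂ = n₁ + d := by have := hg₁.2.2.1.symm.trans hg₂.2.2.1; omega
  refine ⟨DRZ σ U V m₁ n₁ (A₁ ∩ A₂) (B₁ ∩ B₂),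
    ⟨m₁, n₁, A₁ ∩ A₂, B₁ ∩ B₂, hA₁o.inter hA₂o, hB₁o.inter hB₂o,
      inter_subset_left.trans hA₁, inter_subset_left.trans hB₁,
      hHA₁.mono inter_subset_left, hHB₁.mono inter_subset_left, rfl⟩,
    ⟨⟨hg₁.1, hg₂.1⟩, ⟨hg₁.2.1, hg₂.2.1⟩, hg₁.2.2⟩, fun g' hg' => ⟨?_, ?_⟩⟩
  · exact DRZ_mono inter_subset_left inter_subset_left hg'
  · exact DRZ_subset_DRZ_add m₁ n₁ d A₂ B₂ (DRZ_mono inter_subset_right inter_subset_right hg')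

lemma isTopologicalBasis_DRbasic (hU : IsOpen U) (hV : IsOpen V)
    (hσ : IsLocalHomeomorphOn σ U) :
    @TopologicalSpace.IsTopologicalBasis ↥(DRset σ U V) (DRtop σ U V) (DRbasic σ U V) := by
  let := DRtop σ U V
  have hloc := isLocalHomeomorphOn_iterate_iterDom (V := V) hσ
  have hopen := isOpen_iterDom (V := V) hU hV hσ.continuousOn
  refine ⟨?_, ?_, rfl⟩
  · rintro _ ⟨m₁, n₁, A₁, B₁, hA₁o, hB₁o, hA₁, hB₁, hHA₁, hHB₁, rfl⟩
      _ ⟨m₂, n₂, A₂, B₂, hA₂o, hB₂o, hA₂, hB₂, hHA₂, hHB₂, rfl⟩ g ⟨hg₁, hg₂⟩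
    rcases le_total m₁ m₂ with hm | hm
    · exact exists_DRbasic_subset_inter_of_le hA₁o hB₁o hA₂o hB₂o hA₁ hB₁ hHA₁ hHB₁ hm hg₁ hg₂
    · rw [inter_comm]
      exact exists_DRbasic_subset_inter_of_le hA₂o hB₂o hA₁o hB₁o hA₂ hB₂ hHA₂ hHB₂ hm hg₂ hg₁
  · refine eq_univ_of_forall fun g => ?_
    obtain ⟨m, n, hk, hx, hy, he⟩ := g.2
    obtain ⟨A, hAo, hxA, hA, hHA⟩ := (hloc m).exists_homeoOnto (hopen m) hx
    obtain ⟨B, hBo, hyB, hB, hHB⟩ := (hloc n).exists_homeoOnto (hopen n) hy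
    exact ⟨DRZ σ U V m n A B, ⟨m, n, A, B, hAo, hBo, hA, hB, hHA, hHB, rfl⟩,
      hxA, hyB, hk, he⟩

/-- `σᵐ = σⁿ` on the open set of `w ∈ A ∩ B` with `σⁿ w = σᵐ w'` for some `w' ∈ A`: the arrow
`(w', m - n, w) ∈ Z(A, m, n, B)` is in the isotropy, so `w' = w`. -/
lemma mem_DRStabEss_of_DRZ_subset_DRisotropy (hσ : IsLocalHomeomorphOn σ U) {m n : ℕ}
    {A B : Set X} (hAo : IsOpen A) (hBo : IsOpen B)
    (hA : A ⊆ iterDom σ U V m) (hB : B ⊆ iterDom σ U V n)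
    (hZ : DRZ σ U V m n A B ⊆ DRisotropy σ U V) {g : ↥(DRset σ U V)}
    (hg : g ∈ DRZ σ U V m n A B) :
    g.1.2.1 ∈ DRStabEss σ U V g.1.1 := by
  have hgiso : g.1.1 = g.1.2.2 := hZ hg
  obtain ⟨hxA, hyB, hk, he⟩ := hg
  have hloc := isLocalHomeomorphOn_iterate_iterDom (V := V) hσ
  refine ⟨m, n, hk, A ∩ (B ∩ σ^[n] ⁻¹' (σ^[m] '' A)), ?_, ?_, ?_, ?_⟩
  · exact hAo.inter <| ((hloc n).continuousOn.mono hB).isOpen_inter_preimage hBo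
      ((hloc m).isOpen_image_of_subset hAo hA)
  · exact ⟨hxA, hgiso ▸ hyB, g.1.1, hxA, hgiso ▸ he⟩
  · exact fun w hw => ⟨hA hw.1, hB hw.2.1⟩
  · rintro w ⟨-, hwB, w', hw'A, hw'⟩
    have hw'w : w' = w := hZ (show (⟨(w', (m : ℤ) - n, w), m, n, rfl, hA hw'A, hB hwB, hw'⟩ :
      ↥(DRset σ U V)) ∈ DRZ σ U V m n A B from ⟨hw'A, hwB, rfl, hw'⟩)
    rw [← hw', hw'w]

lemma exists_DRbasic_mem_subset_DRisotropy (hσ : IsLocalHomeomorphOn σ U) {g : ↥(DRset σ U V)}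
    (hgiso : g ∈ DRisotropy σ U V) (hg : g.1.2.1 ∈ DRStabEss σ U V g.1.1) :
    ∃ S ∈ DRbasic σ U V, g ∈ S ∧ S ⊆ DRisotropy σ U V := by
  obtain ⟨m, n, hk, O, hOo, hxO, hO, hOeq⟩ := hg
  obtain ⟨A, hAo, hxA, hAO, hHA⟩ :=
    ((isLocalHomeomorphOn_iterate_iterDom hσ m).mono
      (hO.trans inter_subset_left)).exists_homeoOnto hOo hxO
  refine ⟨DRZ σ U V m n A A, ⟨m, n, A, A, hAo, hAo, fun _ ha => (hO (hAO ha)).1,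
    fun _ ha => (hO (hAO ha)).2, hHA, hHA.congr (hOeq.mono hAO), rfl⟩,
    ⟨hxA, hgiso ▸ hxA, hk, by rw [← hgiso]; exact hOeq hxO⟩, ?_⟩
  rintro g' ⟨hx', hy', -, he'⟩
  exact hHA.injOn hx' hy' (he'.trans (hOeq (hAO hy')).symm)

lemma interior_DRisotropy (hU : IsOpen U) (hV : IsOpen V) (hσ : IsLocalHomeomorphOn σ U) :
    @interior _ (DRtop σ U V) (DRisotropy σ U V)
      = {g | g.1.1 = g.1.2.2 ∧ g.1.2.1 ∈ DRStabEss σ U V g.1.1} := by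
  let := DRtop σ U V
  have hbasis := isTopologicalBasis_DRbasic hU hV hσ
  ext g
  rw [mem_interior_iff_mem_nhds, hbasis.mem_nhds_iff]
  constructor
  · rintro ⟨_, ⟨m, n, A, B, hAo, hBo, hA, hB, -, -, rfl⟩, hgZ, hZ⟩
    exact ⟨hZ hgZ, mem_DRStabEss_of_DRZ_subset_DRisotropy hσ hAo hBo hA hB hZ hgZ⟩
  · exact fun ⟨hgiso, hg⟩ => exists_DRbasic_mem_subset_DRisotropy hσ hgiso hg

end Groupoid

theorem stmt19_general {X : Type*} [TopologicalSpace X]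
    (σ : X → X) (U V : Set X)
    (hU : IsOpen U) (hV : IsOpen V) (hσ : IsLocalHomeomorphOn σ U) :
    -- the isotropy is the set of (x, k, x) with k ∈ Stab(x)
    ({g : ↥(DRset σ U V) | g.1.1 = g.1.2.2}
      = {g : ↥(DRset σ U V) | g.1.1 = g.1.2.2 ∧ g.1.2.1 ∈ DRStab σ U V g.1.1}) ∧
    -- its interior is the set of (x, k, x) with k ∈ Stab^ess(x)
    (@interior _ (DRtop σ U V) {g : ↥(DRset σ U V) | g.1.1 = g.1.2.2}
      = {g : ↥(DRset σ U V) | g.1.1 = g.1.2.2 ∧ g.1.2.1 ∈ DRStabEss σ U V g.1.1}) ∧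
    -- in particular:
    (∀ g ∈ @interior _ (DRtop σ U V) {g : ↥(DRset σ U V) | g.1.1 = g.1.2.2},
      ∃ m n : ℕ, g.1.2.1 = (m : ℤ) - (n : ℤ) ∧
        ∃ O : Set X, IsOpen O ∧ g.1.1 ∈ O ∧ O ⊆ iterDom σ U V m ∩ iterDom σ U V n ∧
          Set.EqOn (σ^[m]) (σ^[n]) O) := by
  have hinterior := interior_DRisotropy hU hV hσ
  exact ⟨DRisotropy_eq, hinterior, fun g hg => (hinterior.subset hg).2⟩

theorem stmt19 {X : Type*} [TopologicalSpace X] [LocallyCompactSpace X] [T2Space X]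
    (σ : X → X) (U V : Set X)
    (hU : IsOpen U) (hV : IsOpen V) (hσ : IsLocalHomeomorphOn σ U) (hσV : σ '' U = V) :
    -- the isotropy is the set of (x, k, x) with k ∈ Stab(x)
    ({g : ↥(DRset σ U V) | g.1.1 = g.1.2.2}
      = {g : ↥(DRset σ U V) | g.1.1 = g.1.2.2 ∧ g.1.2.1 ∈ DRStab σ U V g.1.1}) ∧
    -- its interior is the set of (x, k, x) with k ∈ Stab^ess(x)
    (@interior _ (DRtop σ U V) {g : ↥(DRset σ U V) | g.1.1 = g.1.2.2}
      = {g : ↥(DRset σ U V) | g.1.1 = g.1.2.2 ∧ g.1.2.1 ∈ DRStabEss σ U V g.1.1}) ∧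
    -- in particular:
    (∀ g ∈ @interior _ (DRtop σ U V) {g : ↥(DRset σ U V) | g.1.1 = g.1.2.2},
      ∃ m n : ℕ, g.1.2.1 = (m : ℤ) - (n : ℤ) ∧
        ∃ O : Set X, IsOpen O ∧ g.1.1 ∈ O ∧ O ⊆ iterDom σ U V m ∩ iterDom σ U V n ∧
          Set.EqOn (σ^[m]) (σ^[n]) O) :=
  stmt19_general σ U V hU hV hσ
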